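/- For the Hadamard walk on the integer line, for every t ∈ ℕ with t ≥ 1 and every integer n with 0 ≤ n ≤ t and t − n even, the position probabilities satisfy the reflection relations p_L(−n,t) = p_L(n−2,t) and p_R(−n,t) = ((t−n)/(t+n))² · p_R(n,t). -/

import Mathlib

/-- The Hadamard walk on the integer line: `hadamardWalk t n = (Ψ_L(n,t), Ψ_R(n,t))`. -/
noncomputable def hadamardWalk : ℕ → ℤ → ℂ × ℂ
  | 0, n => if n = 0 then (0, 1) else (0, 0)
  | t + 1, n =>
      (((hadamardWalk t (n + 1)).2 - (hadamardWalk t (n + 1)).1) / (Real.sqrt 2 : ℂ),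
       ((hadamardWalk t (n - 1)).2 + (hadamardWalk t (n - 1)).1) / (Real.sqrt 2 : ℂ))

/-- `p_L(n,t) = |Ψ_L(n,t)|²`. -/
noncomputable def pL (n : ℤ) (t : ℕ) : ℝ := ‖(hadamardWalk t n).1‖ ^ 2

/-- `p_R(n,t) = |Ψ_R(n,t)|²`. -/
noncomputable def pR (n : ℤ) (t : ℕ) : ℝ := ‖(hadamardWalk t n).2‖ ^ 2

/-!
After `a` steps to the right and `b ≥ 1` to the left, both amplitudes of the walk are
`2^(-(a+b)/2)` times integers given, up to the sign `(-1)^(b-1)`, by alternating binomial sums: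
`S(a, b-1) = ∑ₖ (-1)^k C(a,k) C(b-1,k)` for `Ψ_L` and `T(a, b-1) = ∑ₖ (-1)^k C(a,k+1) C(b-1,k)`
for `Ψ_R`, as one checks against the recurrences with Pascal's rule. The sum `S` is symmetric,
which gives the relation for `p_L`; for `T` the identity `(p+1) C(p,k) = (k+1) C(p+1,k+1)` gives
`(p+1) T(q+1,p) = (q+1) T(p+1,q)`, which gives the relation for `p_R` with the ratio
`b/a = (t-n)/(t+n)`.
-/

open Finset

theorem Finset.sum_range_succ_mul_choose_of_lt {R : Type*} [Semiring R] (f : ℕ → R)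
    {b m : ℕ} (h : b < m) :
    ∑ k ∈ range (b + 1), f k * b.choose k = ∑ k ∈ range m, f k * b.choose k := by
  refine sum_subset (range_subset_range.2 h) fun k _ hk ↦ ?_
  rw [Nat.choose_eq_zero_of_lt (by simpa using hk), Nat.cast_zero, mul_zero]

theorem sq_eq_sq_of_neg_one_pow_mul_eq {R : Type*} [CommRing R] {x y : R} {m k : ℕ}
    (h : (-1) ^ m * x = (-1) ^ k * y) : x ^ 2 = y ^ 2 := by
  have h2 := congrArg (· ^ 2) h
  simp only [mul_pow, pow_right_comm _ _ 2, neg_one_sq, one_pow, one_mul] at h2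
  exact h2

theorem norm_intCast_div_sqrt_two_pow_sq (m : ℤ) (t : ℕ) :
    ‖(m : ℂ) / (Real.sqrt 2 : ℂ) ^ t‖ ^ 2 = m ^ 2 / 2 ^ t := by
  rw [norm_div, norm_pow, Complex.norm_intCast, Complex.norm_real,
    Real.norm_of_nonneg (by positivity), div_pow, sq_abs, ← pow_mul, mul_comm, pow_mul,
    Real.sq_sqrt zero_le_two]

theorem hadamardWalk_eq_zero_of_lt_abs {t : ℕ} {n : ℤ} (h : (t : ℤ) < |n|) :
    hadamardWalk t n = 0 := by
  induction t generalizing n with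
  | zero =>
    have hn : n ≠ 0 := by rintro rfl; simp at h
    simp [hadamardWalk, hn]
  | succ t ih =>
    rw [lt_abs] at h
    rw [hadamardWalk, ih (by rw [lt_abs]; omega), ih (by rw [lt_abs]; omega)]
    simp [Prod.ext_iff]

namespace HadamardWalk

def altChooseSum (a b : ℕ) : ℤ :=
  ∑ k ∈ range (b + 1), (-1) ^ k * a.choose k * b.choose k

def altChooseSuccSum (a b : ℕ) : ℤ :=
  ∑ k ∈ range (b + 1), (-1) ^ k * a.choose (k + 1) * b.choose k

theorem altChooseSum_comm (a b : ℕ) : altChooseSum a b = altChooseSum b a := by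
  rw [altChooseSum, altChooseSum, sum_range_succ_mul_choose_of_lt _ (show b < a + b + 1 by omega),
    sum_range_succ_mul_choose_of_lt _ (show a < a + b + 1 by omega)]
  exact sum_congr rfl fun k _ ↦ by ring

theorem altChooseSum_succ_right (a c : ℕ) :
    altChooseSum a (c + 1) = altChooseSum a c - altChooseSuccSum a c := by
  rw [altChooseSum, altChooseSum,
    sum_range_succ_mul_choose_of_lt (b := c) (m := c + 1 + 1) _ (by omega),
    sum_range_succ' _ (c + 1), sum_range_succ' _ (c + 1), altChooseSuccSum, eq_sub_iff_add_eq,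
    add_right_comm, ← sum_add_distrib]
  congr 1
  · refine sum_congr rfl fun k _ ↦ ?_
    rw [Nat.choose_succ_succ']
    push_cast
    ring
  · simp

theorem altChooseSuccSum_succ_left (a c : ℕ) :
    altChooseSuccSum (a + 1) c = altChooseSuccSum a c + altChooseSum a c := by
  rw [altChooseSuccSum, altChooseSuccSum, altChooseSum, ← sum_add_distrib]
  refine sum_congr rfl fun k _ ↦ ?_
  rw [Nat.choose_succ_succ']
  push_cast
  ring

theorem altChooseSuccSum_zero_left (b : ℕ) : altChooseSuccSum 0 b = 0 :=
  sum_eq_zero fun k _ ↦ by simp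

theorem add_one_mul_altChooseSuccSum_comm (p q : ℕ) :
    (p + 1 : ℤ) * altChooseSuccSum (q + 1) p = (q + 1) * altChooseSuccSum (p + 1) q := by
  rw [altChooseSuccSum, altChooseSuccSum,
    sum_range_succ_mul_choose_of_lt _ (show p < p + q + 1 by omega),
    sum_range_succ_mul_choose_of_lt _ (show q < p + q + 1 by omega), mul_sum, mul_sum]
  refine sum_congr rfl fun k _ ↦ ?_
  have hp := congrArg (Nat.cast : ℕ → ℤ) (Nat.add_one_mul_choose_eq p k)
  have hq := congrArg (Nat.cast : ℕ → ℤ) (Nat.add_one_mul_choose_eq q k)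
  push_cast at hp hq
  linear_combination (-1) ^ k * ((q + 1).choose (k + 1) : ℤ) * hp
    - (-1) ^ k * ((p + 1).choose (k + 1) : ℤ) * hq

def ampL : ℕ → ℕ → ℤ
  | _, 0 => 0
  | a, b + 1 => (-1) ^ b * altChooseSum a b

def ampR : ℕ → ℕ → ℤ
  | _, 0 => 1
  | a, b + 1 => (-1) ^ b * altChooseSuccSum a b

theorem ampL_succ_right (a b : ℕ) : ampL a (b + 1) = ampR a b - ampL a b := by
  cases b with
  | zero => simp [ampL, ampR, altChooseSum]
  | succ c =>
    rw [ampL, ampL, ampR, altChooseSum_succ_right]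
    ring

theorem ampR_succ_left (a b : ℕ) : ampR (a + 1) b = ampR a b + ampL a b := by
  cases b with
  | zero => simp [ampL, ampR]
  | succ c =>
    rw [ampL, ampR, ampR, altChooseSuccSum_succ_left]
    ring

theorem ampR_zero_succ (b : ℕ) : ampR 0 (b + 1) = 0 := by
  rw [ampR, altChooseSuccSum_zero_left, mul_zero]

theorem neg_one_pow_mul_ampL_succ (a b : ℕ) :
    (-1) ^ b * ampL b (a + 1) = (-1) ^ a * ampL a (b + 1) := by
  rw [ampL, ampL, altChooseSum_comm]
  ring

theorem neg_one_pow_mul_ampR (a b : ℕ) :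
    (-1) ^ b * (a * ampR b a) = (-1) ^ a * (b * ampR a b) := by
  cases a with
  | zero => cases b <;> simp [ampR_zero_succ]
  | succ p =>
    cases b with
    | zero => simp [ampR_zero_succ]
    | succ q =>
      rw [ampR, ampR, pow_succ, pow_succ]
      push_cast
      linear_combination -(-1) ^ (p + q) * add_one_mul_altChooseSuccSum_comm p q

end HadamardWalk

open HadamardWalk

theorem hadamardWalk_natCast_sub {a b t : ℕ} (h : a + b = t) :
    hadamardWalk t (a - b) =
      (ampL a b / (Real.sqrt 2 : ℂ) ^ t, ampR a b / (Real.sqrt 2 : ℂ) ^ t) := by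
  induction t generalizing a b with
  | zero =>
    obtain ⟨rfl, rfl⟩ : a = 0 ∧ b = 0 := by omega
    simp [hadamardWalk, ampL, ampR]
  | succ t ih =>
    rw [hadamardWalk, Prod.ext_iff]
    constructor
    · cases b with
      | zero =>
        rw [hadamardWalk_eq_zero_of_lt_abs (by rw [lt_abs]; omega)]
        simp [ampL]
      | succ c =>
        rw [show (a : ℤ) - (c + 1 : ℕ) + 1 = a - c by push_cast; ring, ih (by omega),
          ampL_succ_right]
        push_cast
        ring
    · cases a with
      | zero =>
        obtain ⟨c, rfl⟩ : ∃ c, b = c + 1 := ⟨t, by omega⟩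
        rw [hadamardWalk_eq_zero_of_lt_abs (n := (0 : ℕ) - (c + 1 : ℕ) - 1)
          (by rw [lt_abs]; omega), ampR_zero_succ]
        simp
      | succ a =>
        rw [show ((a + 1 : ℕ) : ℤ) - b - 1 = a - b by push_cast; ring, ih (by omega),
          ampR_succ_left]
        push_cast
        ring

theorem pL_natCast_sub {a b t : ℕ} (h : a + b = t) : pL (a - b) t = ampL a b ^ 2 / 2 ^ t := by
  rw [pL, hadamardWalk_natCast_sub h, norm_intCast_div_sqrt_two_pow_sq]

theorem pR_natCast_sub {a b t : ℕ} (h : a + b = t) : pR (a - b) t = ampR a b ^ 2 / 2 ^ t := by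
  rw [pR, hadamardWalk_natCast_sub h, norm_intCast_div_sqrt_two_pow_sq]

theorem hadamardWalk_reflection_relations
    (t : ℕ) (ht : 1 ≤ t) (n : ℤ) (hn0 : 0 ≤ n) (hnt : n ≤ (t : ℤ))
    (hpar : (2 : ℤ) ∣ ((t : ℤ) - n)) :
    pL (-n) t = pL (n - 2) t ∧
    pR (-n) t = (((t : ℝ) - (n : ℝ)) / ((t : ℝ) + (n : ℝ))) ^ 2 * pR n t := by
  obtain ⟨b, hb⟩ := hpar
  lift b to ℕ using by omega
  obtain ⟨a, rfl⟩ : ∃ a : ℕ, t = a + 1 + b := ⟨t - b - 1, by omega⟩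
  obtain rfl : n = (a + 1 : ℕ) - b := by push_cast at hb ⊢; omega
  have hL : ((ampL b (a + 1)) ^ 2 : ℝ) = ampL a (b + 1) ^ 2 := by
    exact_mod_cast sq_eq_sq_of_neg_one_pow_mul_eq (neg_one_pow_mul_ampL_succ a b)
  have hR : (((a + 1 : ℕ) * ampR b (a + 1)) ^ 2 : ℝ) = (b * ampR (a + 1) b) ^ 2 := by
    exact_mod_cast sq_eq_sq_of_neg_one_pow_mul_eq (neg_one_pow_mul_ampR (a + 1) b)
  rw [neg_sub, show ((a + 1 : ℕ) : ℤ) - b - 2 = a - (b + 1 : ℕ) by push_cast; ring,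
    pL_natCast_sub (by ring), pL_natCast_sub (by ring), pR_natCast_sub (by ring),
    pR_natCast_sub rfl, hL]
  refine ⟨rfl, ?_⟩
  push_cast at hR ⊢
  field_simp
  linear_combination 4 * hR
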